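/- Let G = (N, Act, R) be a first-order grammar, let σ be a substitution, x_i a variable, H a term with H ≠ x_i, and k ∈ ℕ, and suppose x_iσ ∼_k Hσ in L^act_G. Let H' be the unique term such that x_i does not occur in H' and H' = H{(x_i ↦ H')}, and let σ∖x_i denote the substitution equal to σ except that (σ∖x_i)(x_i) = x_i. Then σ ∼_k {(x_i ↦ H')}(σ∖x_i); equivalently, x_iσ ∼_k H'σ, and x_jσ = x_j({(x_i ↦ H')}(σ∖x_i)) for all j ≠ i. -/

import Mathlib

/-- The "signature" of a first-order grammar: a finite set of ranked nonterminals
(represented as `Fin ntCount`, with arities) and a finite set of actions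
(represented as `Fin actCount`). -/
structure GrammarSig where
  ntCount : ℕ
  arity : Fin ntCount → ℕ
  actCount : ℕ

/-- The polynomial functor whose coinductive fixed point is the set of (finite or
infinite) terms over the nonterminals: a node is labelled either by a nonterminal
`A` (with `arity A` ordered children) or by a variable `x_n`, `n : ℕ` (a leaf). -/
def GrammarSig.P (S : GrammarSig) : PFunctor :=
  ⟨Fin S.ntCount ⊕ ℕ, fun l =>
    match l with
    | Sum.inl A => Fin (S.arity A)
    | Sum.inr _ => Empty⟩

/-- Terms over the signature `S`: finite or infinite ordered trees with nodes labelled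
by nonterminals (inner nodes) or variables (leaves). -/
def GTerm (S : GrammarSig) := PFunctor.M S.P

/-- The term consisting of the single variable `x_n`. -/
def GTerm.var (S : GrammarSig) (n : ℕ) : GTerm S :=
  PFunctor.M.mk ⟨Sum.inr n, fun e => e.elim⟩

/-- The term `A(c 0, …, c (m-1))`. -/
def GTerm.app {S : GrammarSig} (A : Fin S.ntCount) (c : Fin (S.arity A) → GTerm S) :
    GTerm S :=
  PFunctor.M.mk ⟨Sum.inl A, c⟩

/-- Applying a substitution `σ` to a term `T`: every occurrence of a variable `x_n`
in `T` is replaced by `σ n` (defined corecursively). -/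
def GTerm.subst {S : GrammarSig} (σ : ℕ → GTerm S) (T : GTerm S) : GTerm S :=
  PFunctor.M.corec
    (fun st : Bool × GTerm S =>
      match PFunctor.M.dest st.2 with
      | ⟨Sum.inl A, c⟩ => ⟨Sum.inl A, fun i => (st.1, c i)⟩
      | ⟨Sum.inr n, _⟩ =>
        if st.1 then
          ⟨(PFunctor.M.dest (σ n)).1, fun i => (false, (PFunctor.M.dest (σ n)).2 i)⟩
        else ⟨Sum.inr n, fun e => e.elim⟩)
    (true, T)

/-- A substitution (as a total map `ℕ → GTerm S`) has finite support. -/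
def FinSupp {S : GrammarSig} (σ : ℕ → GTerm S) : Prop :=
  {n | σ n ≠ GTerm.var S n}.Finite

/-- `childRel S T T'`: `T'` is a root-successor (depth-1 subterm occurrence) of `T`. -/
def childRel (S : GrammarSig) : GTerm S → GTerm S → Prop := fun T T' =>
  ∃ (A : Fin S.ntCount) (c : Fin (S.arity A) → GTerm S), T = GTerm.app A c ∧ ∃ i, T' = c i

/-- `T'` is a subterm of `T`. -/
def SubtermOf (S : GrammarSig) (T' T : GTerm S) : Prop :=
  Relation.ReflTransGen (childRel S) T T'

/-- The variable `x_n` occurs in `T`. -/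
def VarOccurs (S : GrammarSig) (n : ℕ) (T : GTerm S) : Prop :=
  SubtermOf S (GTerm.var S n) T

/-- `OccAtDepth S d T V`: `V` has a subterm-occurrence in `T` at depth `d`. -/
inductive OccAtDepth (S : GrammarSig) : ℕ → GTerm S → GTerm S → Prop
  | refl (T : GTerm S) : OccAtDepth S 0 T T
  | step {d : ℕ} {T T' V : GTerm S} :
      childRel S T T' → OccAtDepth S d T' V → OccAtDepth S (d + 1) T V

/-- A term is regular if it has only finitely many distinct subterms. -/
def RegularT (S : GrammarSig) (T : GTerm S) : Prop := {T' | SubtermOf S T' T}.Finite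

/-- The presentation size of a (regular) term: the number of its distinct subterms. -/
noncomputable def pressize (S : GrammarSig) (T : GTerm S) : ℕ :=
  {T' | SubtermOf S T' T}.ncard

/-- Finite terms over the signature `S`. -/
inductive FTerm (S : GrammarSig) where
  | var : ℕ → FTerm S
  | app : (A : Fin S.ntCount) → (Fin (S.arity A) → FTerm S) → FTerm S

/-- The (finite or infinite) term corresponding to a finite term. -/
def FTerm.toTerm {S : GrammarSig} : FTerm S → GTerm S
  | .var n => GTerm.var S n
  | .app A c => GTerm.app A (fun i => (c i).toTerm)

/-- The variable `x_n` occurs in the finite term `E`. -/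
def FTerm.VOccurs {S : GrammarSig} (n : ℕ) : FTerm S → Prop
  | .var m => m = n
  | .app _ c => ∃ i, (c i).VOccurs n

/-- The depth of a finite term (the largest depth of a subterm occurrence). -/
def FTerm.depth {S : GrammarSig} : FTerm S → ℕ
  | .var _ => 0
  | .app _ c => Finset.univ.sup fun i => (c i).depth + 1

/-- A rule `A(x_0, …, x_{m−1}) →ₐ E` of a first-order grammar: `E` is a finite term
all of whose variables are among `x_0, …, x_{m−1}` where `m = arity A`. -/
structure GRule (S : GrammarSig) where
  nt : Fin S.ntCount
  act : Fin S.actCount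
  rhs : FTerm S
  rhs_wf : ∀ n : ℕ, rhs.VOccurs n → n < S.arity nt

/-- A first-order grammar: a signature together with a finite set (list) of rules. -/
structure FOGrammar where
  sig : GrammarSig
  rules : List (GRule sig)

/-- The term `A(x_0, …, x_{m−1})` (the left-hand side of rules for `A`). -/
def lhsTerm {S : GrammarSig} (A : Fin S.ntCount) : GTerm S :=
  GTerm.app A fun i => GTerm.var S i.val

/-- A labelled transition system with states `S` and actions `A`. -/
structure LTS (S : Type*) (A : Type*) where
  Tr : A → S → S → Prop

namespace LTS

variable {S A : Type*}

/-- An LTS is image-finite if each state has finitely many `a`-successors. -/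
def ImageFinite (L : LTS S A) : Prop := ∀ a s, {t | L.Tr a s t}.Finite

/-- A set `B` of pairs of states covers the pair `p`. -/
def Covers (L : LTS S A) (B : Set (S × S)) (p : S × S) : Prop :=
  (∀ a s', L.Tr a p.1 s' → ∃ t', L.Tr a p.2 t' ∧ (s', t') ∈ B) ∧
  (∀ a t', L.Tr a p.2 t' → ∃ s', L.Tr a p.1 s' ∧ (s', t') ∈ B)

/-- `B'` covers the set `B` (i.e., covers each of its pairs). -/
def CoversSet (L : LTS S A) (B' B : Set (S × S)) : Prop := ∀ p ∈ B, L.Covers B' p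

/-- `B ⊐ B'`: `B'` is a minimal expansion for `B`. -/
def MinExp (L : LTS S A) (B B' : Set (S × S)) : Prop :=
  L.CoversSet B' B ∧ ∀ B'', B'' ⊂ B' → ¬ L.CoversSet B'' B

/-- The stratified equivalences: `∼_0` is everything, `∼_{k+1}` are the pairs covered by `∼_k`. -/
def simN (L : LTS S A) : ℕ → Set (S × S)
  | 0 => Set.univ
  | k + 1 => {p | L.Covers (L.simN k) p}

/-- `eqlevel(s,t) ∈ ℕ ∪ {ω}`: the largest `e` with `s ∼_e t` (`⊤` plays the role of `ω`,
meaning `s ∼_k t` for all `k ∈ ℕ`). -/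
noncomputable def eqlevel (L : LTS S A) (s t : S) : ℕ∞ :=
  sSup {e : ℕ∞ | ∃ k : ℕ, e = (k : ℕ∞) ∧ (s, t) ∈ L.simN k}

/-- `LeastEqLev(B) = min {eqlevel(s,t) | (s,t) ∈ B}`, with `min ∅ = ω = ⊤`. -/
noncomputable def leastEqLev (L : LTS S A) (B : Set (S × S)) : ℕ∞ :=
  sInf {e : ℕ∞ | ∃ p ∈ B, e = L.eqlevel p.1 p.2}

/-- `B` is a bisimulation if it covers itself. -/
def Bisimulation (L : LTS S A) (B : Set (S × S)) : Prop := L.CoversSet B B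

/-- `s ∼ t`: some bisimulation contains `(s,t)`. -/
def Bisim (L : LTS S A) (s t : S) : Prop := ∃ B, L.Bisimulation B ∧ (s, t) ∈ B

end LTS

/-- The rule-based LTS `L^rul_G`: states are the terms, actions are the rules of `G`,
and a rule `r : A(x_0,…,x_{m−1}) →ₐ E` induces `(A(x_0,…,x_{m−1}))σ →r Eσ` for every
substitution `σ`. -/
def LTSrul (G : FOGrammar) : LTS (GTerm G.sig) (GRule G.sig) where
  Tr r T T' := r ∈ G.rules ∧ ∃ σ : ℕ → GTerm G.sig, FinSupp σ ∧
    T = GTerm.subst σ (lhsTerm r.nt) ∧ T' = GTerm.subst σ r.rhs.toTerm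

/-- The action-based LTS `L^act_G`: the transitions of `L^rul_G` relabelled by the
actions of the rules; in addition each variable `x_n` has its own fresh action
(represented by `Sum.inr n`) with the single transition `x_n →_{a_{x_n}} x_n`. -/
def LTSact (G : FOGrammar) : LTS (GTerm G.sig) (Fin G.sig.actCount ⊕ ℕ) where
  Tr a T T' :=
    match a with
    | Sum.inl a => ∃ r : GRule G.sig, r.act = a ∧ (LTSrul G).Tr r T T'
    | Sum.inr n => T = GTerm.var G.sig n ∧ T' = GTerm.var G.sig n

/-- `RPath G T w T'`: the path `T →w T'` in the rule-based LTS `L^rul_G`, `w ∈ R*`. -/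
inductive RPath (G : FOGrammar) : GTerm G.sig → List (GRule G.sig) → GTerm G.sig → Prop
  | nil (T : GTerm G.sig) : RPath G T [] T
  | cons {T T1 T' : GTerm G.sig} {r : GRule G.sig} {w : List (GRule G.sig)} :
      (LTSrul G).Tr r T T1 → RPath G T1 w T' → RPath G T (r :: w) T'

/-- `APath G T w T'`: the path `T →w T'` in the action-based LTS `L^act_G` for a word
`w ∈ Act*` of proper actions (using no special variable transitions). -/
inductive APath (G : FOGrammar) :
    GTerm G.sig → List (Fin G.sig.actCount) → GTerm G.sig → Prop
  | nil (T : GTerm G.sig) : APath G T [] T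
  | cons {T T1 T' : GTerm G.sig} {a : Fin G.sig.actCount} {w : List (Fin G.sig.actCount)} :
      (LTSact G).Tr (Sum.inl a) T T1 → APath G T1 w T' → APath G T (a :: w) T'

/-- The substitution that (only) replaces the variable `x_i` by `K`. -/
def singleSub {S : GrammarSig} (i : ℕ) (K : GTerm S) : ℕ → GTerm S :=
  fun j => if j = i then K else GTerm.var S j

/-- The substitution `σ∖x_i`, equal to `σ` except that it leaves `x_i` unchanged. -/
def remSub {S : GrammarSig} (σ : ℕ → GTerm S) (i : ℕ) : ℕ → GTerm S :=
  fun j => if j = i then GTerm.var S j else σ j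

/-!
Put `τ := {(x_i ↦ H')}(σ∖x_i)`. Then `τ` agrees with `σ` away from `x_i`, and `x_iτ = Hτ` because
`H' = H{(x_i ↦ H')}`. The transitions of an application term `A(…)σ` are those of `A(…)`
instantiated by `σ`, so pointwise `σ ∼_m τ` lifts to `Tσ ∼_{m+1} Tτ` for every term `T` that is
not a variable on which `σ` and `τ` differ; in particular for `T = H`. By induction on `m ≤ k`,
`x_iσ ∼_{m+1} Hσ ∼_{m+1} Hτ = x_iτ`.
-/

namespace GTerm

variable {S : GrammarSig}

/-- The flag in the state says whether we are still reading `T` (`true`) or copying a term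
`σ n` that has already been inserted (`false`). -/
def substStep (σ : ℕ → GTerm S) (st : Bool × GTerm S) : S.P (Bool × GTerm S) :=
  match PFunctor.M.dest st.2 with
  | ⟨Sum.inl A, c⟩ => ⟨Sum.inl A, fun i => (st.1, c i)⟩
  | ⟨Sum.inr n, _⟩ =>
    if st.1 then
      ⟨(PFunctor.M.dest (σ n)).1, fun i => (false, (PFunctor.M.dest (σ n)).2 i)⟩
    else ⟨Sum.inr n, fun e => e.elim⟩

theorem subst_eq_corec (σ : ℕ → GTerm S) (T : GTerm S) :
    subst σ T = PFunctor.M.corec (substStep σ) (true, T) := rfl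

theorem dest_app (A : Fin S.ntCount) (c : Fin (S.arity A) → GTerm S) :
    PFunctor.M.dest (app A c) = ⟨Sum.inl A, c⟩ := rfl

theorem eq_var_of_dest {T : GTerm S} {n : ℕ} {f : S.P.B (Sum.inr n) → GTerm S}
    (h : PFunctor.M.dest T = ⟨Sum.inr n, f⟩) : T = var S n := by
  rw [← PFunctor.M.mk_dest T, h, var]
  congr
  funext e
  exact e.elim

theorem eq_var_or_eq_app (T : GTerm S) :
    (∃ n, T = var S n) ∨ ∃ A c, T = app A c := by
  rcases h : PFunctor.M.dest T with ⟨A | n, c⟩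
  · exact Or.inr ⟨A, c, by rw [← PFunctor.M.mk_dest T, h]; rfl⟩
  · exact Or.inl ⟨n, eq_var_of_dest h⟩

theorem var_ne_app (n : ℕ) (A : Fin S.ntCount) (c : Fin (S.arity A) → GTerm S) :
    var S n ≠ app A c := fun h =>
  Sum.inr_ne_inl (congrArg (fun T => (PFunctor.M.dest T).1) h)

theorem app_inj {A A' : Fin S.ntCount} {c : Fin (S.arity A) → GTerm S}
    {c' : Fin (S.arity A') → GTerm S} (h : app A c = app A' c') : A = A' ∧ HEq c c' := by
  obtain ⟨hA, hc⟩ := Sigma.mk.inj_iff.mp (congrArg PFunctor.M.dest h)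
  exact ⟨Sum.inl.inj hA, hc⟩

theorem corec_substStep_false (σ : ℕ → GTerm S) (T : GTerm S) :
    PFunctor.M.corec (substStep σ) (false, T) = T := by
  refine PFunctor.M.bisim' (fun _ => True) (fun T => PFunctor.M.corec (substStep σ) (false, T))
    id (fun T _ => ?_) T trivial
  rcases h : PFunctor.M.dest T with ⟨A | n, c⟩
  · refine ⟨Sum.inl A, _, c, ?_, h, fun i => ⟨c i, trivial, rfl, rfl⟩⟩
    rw [PFunctor.M.dest_corec, substStep, h]
    rfl
  · refine ⟨Sum.inr n, c, c, ?_, h, fun e => (e : Empty).elim⟩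
    rw [PFunctor.M.dest_corec, substStep, h]
    exact congrArg (Sigma.mk _) (funext fun e => (e : Empty).elim)

@[simp]
theorem subst_var (σ : ℕ → GTerm S) (n : ℕ) : subst σ (var S n) = σ n := by
  have hstep : substStep σ (true, var S n) =
      ⟨(PFunctor.M.dest (σ n)).1, fun i => (false, (PFunctor.M.dest (σ n)).2 i)⟩ := rfl
  rw [← PFunctor.M.mk_dest (subst σ _), ← PFunctor.M.mk_dest (σ n), subst_eq_corec,
    PFunctor.M.dest_corec, hstep, PFunctor.map_eq]
  exact congrArg PFunctor.M.mk (congrArg (Sigma.mk _) (funext fun i => corec_substStep_false σ _))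

@[simp]
theorem subst_app (σ : ℕ → GTerm S) (A : Fin S.ntCount) (c : Fin (S.arity A) → GTerm S) :
    subst σ (app A c) = app A fun i => subst σ (c i) := by
  rw [← PFunctor.M.mk_dest (subst σ _), subst_eq_corec, PFunctor.M.dest_corec]
  rfl

theorem subst_subst (σ ρ : ℕ → GTerm S) (T : GTerm S) :
    subst σ (subst ρ T) = subst (fun n => subst σ (ρ n)) T := by
  let R : GTerm S → GTerm S → Prop := fun x y =>
    x = y ∨ ∃ T, x = subst σ (subst ρ T) ∧ y = subst (fun n => subst σ (ρ n)) T
  have diag : ∀ x : GTerm S, ∃ a f f', PFunctor.M.dest x = ⟨a, f⟩ ∧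
      PFunctor.M.dest x = ⟨a, f'⟩ ∧ ∀ i, R (f i) (f' i) :=
    fun x => ⟨_, _, _, rfl, rfl, fun _ => Or.inl rfl⟩
  refine PFunctor.M.bisim R ?_ _ _ (Or.inr ⟨T, rfl, rfl⟩)
  rintro x y (rfl | ⟨T, rfl, rfl⟩)
  · exact diag x
  rcases eq_var_or_eq_app T with ⟨n, rfl⟩ | ⟨A, c, rfl⟩
  · simp only [subst_var]
    exact diag _
  · simp only [subst_app]
    exact ⟨Sum.inl A, _, _, dest_app _ _, dest_app _ _, fun i => Or.inr ⟨c i, rfl, rfl⟩⟩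

theorem subst_toTerm_congr {σ τ : ℕ → GTerm S} (E : FTerm S)
    (h : ∀ n, E.VOccurs n → σ n = τ n) : subst σ E.toTerm = subst τ E.toTerm := by
  induction E with
  | var n => simpa [FTerm.toTerm] using h n rfl
  | app A c ih =>
    simp only [FTerm.toTerm, subst_app]
    exact congrArg (app A) (funext fun i => ih i fun n hn => h n ⟨i, hn⟩)

theorem subst_lhsTerm (ρ : ℕ → GTerm S) (A : Fin S.ntCount) :
    subst ρ (lhsTerm A) = app A fun i => ρ i := by
  simp [lhsTerm]

def finSub {m : ℕ} (c : Fin m → GTerm S) : ℕ → GTerm S :=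
  fun n => if h : n < m then c ⟨n, h⟩ else var S n

theorem finSupp_finSub {m : ℕ} (c : Fin m → GTerm S) : FinSupp (finSub c) :=
  (Set.finite_Iio m).subset fun n hn => by
    by_contra h
    exact hn (dif_neg h)

end GTerm

namespace LTS

variable {St Act : Type*} (L : LTS St Act)

theorem simN_refl (k : ℕ) (s : St) : (s, s) ∈ L.simN k := by
  induction k generalizing s with
  | zero => trivial
  | succ k ih => exact ⟨fun a s' h => ⟨s', h, ih s'⟩, fun a t' h => ⟨t', h, ih t'⟩⟩

variable {L}

theorem simN_symm {k : ℕ} {s t : St} (h : (s, t) ∈ L.simN k) : (t, s) ∈ L.simN k := by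
  induction k generalizing s t with
  | zero => trivial
  | succ k ih =>
    exact ⟨fun a t' htr => (h.2 a t' htr).imp fun _ hs => ⟨hs.1, ih hs.2⟩,
      fun a s' htr => (h.1 a s' htr).imp fun _ ht => ⟨ht.1, ih ht.2⟩⟩

theorem simN_trans {k : ℕ} {s t u : St} (hst : (s, t) ∈ L.simN k) (htu : (t, u) ∈ L.simN k) :
    (s, u) ∈ L.simN k := by
  induction k generalizing s t u with
  | zero => trivial
  | succ k ih =>
    constructor
    · intro a s' hs
      obtain ⟨t', ht, hst'⟩ := hst.1 a s' hs
      obtain ⟨u', hu, htu'⟩ := htu.1 a t' ht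
      exact ⟨u', hu, ih hst' htu'⟩
    · intro a u' hu
      obtain ⟨t', ht, htu'⟩ := htu.2 a u' hu
      obtain ⟨s', hs, hst'⟩ := hst.2 a t' ht
      exact ⟨s', hs, ih hst' htu'⟩

theorem simN_succ_subset (k : ℕ) : L.simN (k + 1) ⊆ L.simN k := by
  induction k with
  | zero => exact Set.subset_univ _
  | succ k ih =>
    exact fun p hp => ⟨fun a s' h => (hp.1 a s' h).imp fun _ ht => ⟨ht.1, ih ht.2⟩,
      fun a t' h => (hp.2 a t' h).imp fun _ hs => ⟨hs.1, ih hs.2⟩⟩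

theorem simN_antitone : Antitone L.simN :=
  antitone_nat_of_succ_le simN_succ_subset

end LTS

open GTerm LTS

section Grammar

variable {G : FOGrammar}

theorem LTSrul_tr_subst_app {r : GRule G.sig} {σ : ℕ → GTerm G.sig} {A : Fin G.sig.ntCount}
    {c : Fin (G.sig.arity A) → GTerm G.sig} {T' : GTerm G.sig}
    (h : (LTSrul G).Tr r (subst σ (app A c)) T') :
    ∃ F, T' = subst σ F ∧ ∀ τ, (LTSrul G).Tr r (subst τ (app A c)) (subst τ F) := by
  obtain ⟨hr, ρ, -, hlhs, rfl⟩ := h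
  rw [subst_app, subst_lhsTerm] at hlhs
  obtain ⟨rfl, hc⟩ := app_inj hlhs
  have hρ : ∀ j : Fin _, ρ j = subst σ (c j) := fun j => (congrFun (eq_of_heq hc) j).symm
  have hrhs : ∀ τ : ℕ → GTerm G.sig, subst (finSub fun j => subst τ (c j)) r.rhs.toTerm =
      subst τ (subst (finSub c) r.rhs.toTerm) := by
    intro τ
    rw [subst_subst]
    refine subst_toTerm_congr _ fun n hn => ?_
    simp [finSub, r.rhs_wf n hn]
  refine ⟨subst (finSub c) r.rhs.toTerm, ?_,
    fun τ => ⟨hr, _, finSupp_finSub _, ?_, (hrhs τ).symm⟩⟩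
  · rw [← hrhs σ]
    refine subst_toTerm_congr _ fun n hn => ?_
    simp [finSub, r.rhs_wf n hn, ← hρ]
  · simp [subst_lhsTerm, finSub]

theorem LTSact_tr_subst_app {a : Fin G.sig.actCount ⊕ ℕ} {σ : ℕ → GTerm G.sig}
    {A : Fin G.sig.ntCount} {c : Fin (G.sig.arity A) → GTerm G.sig} {T' : GTerm G.sig}
    (h : (LTSact G).Tr a (subst σ (app A c)) T') :
    ∃ F, T' = subst σ F ∧ ∀ τ, (LTSact G).Tr a (subst τ (app A c)) (subst τ F) := by
  cases a with
  | inl a =>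
    obtain ⟨r, rfl, hr⟩ := h
    obtain ⟨F, rfl, hF⟩ := LTSrul_tr_subst_app hr
    exact ⟨F, rfl, fun τ => ⟨r, rfl, hF τ⟩⟩
  | inr n => exact absurd (h.1.symm.trans (subst_app σ A c)) (var_ne_app n A _)

theorem subst_app_mem_simN_succ {m : ℕ} {σ τ : ℕ → GTerm G.sig}
    (h : ∀ T, (subst σ T, subst τ T) ∈ (LTSact G).simN m)
    (A : Fin G.sig.ntCount) (c : Fin (G.sig.arity A) → GTerm G.sig) :
    (subst σ (app A c), subst τ (app A c)) ∈ (LTSact G).simN (m + 1) := by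
  have forth : ∀ σ τ : ℕ → GTerm G.sig, (∀ T, (subst σ T, subst τ T) ∈ (LTSact G).simN m) →
      ∀ a T', (LTSact G).Tr a (subst σ (app A c)) T' →
        ∃ T'', (LTSact G).Tr a (subst τ (app A c)) T'' ∧ (T', T'') ∈ (LTSact G).simN m := by
    rintro σ τ h a _ hT
    obtain ⟨F, rfl, hF⟩ := LTSact_tr_subst_app hT
    exact ⟨_, hF τ, h F⟩
  refine ⟨forth σ τ h, fun a T' hT => ?_⟩
  obtain ⟨T'', hT'', hsim⟩ := forth τ σ (fun T => simN_symm (h T)) a T' hT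
  exact ⟨T'', hT'', simN_symm hsim⟩

theorem subst_mem_simN {m : ℕ} {σ τ : ℕ → GTerm G.sig}
    (h : ∀ n, (σ n, τ n) ∈ (LTSact G).simN m) (T : GTerm G.sig) :
    (subst σ T, subst τ T) ∈ (LTSact G).simN m := by
  induction m generalizing T with
  | zero => trivial
  | succ m ih =>
    rcases eq_var_or_eq_app T with ⟨n, rfl⟩ | ⟨A, c, rfl⟩
    · simpa using h n
    · exact subst_app_mem_simN_succ (ih fun n => simN_succ_subset m (h n)) A c

theorem subst_mem_simN_succ {m : ℕ} {σ τ : ℕ → GTerm G.sig}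
    (hστ : ∀ n, (σ n, τ n) ∈ (LTSact G).simN m) (T : GTerm G.sig)
    (hT : ∀ n, T = var G.sig n → (σ n, τ n) ∈ (LTSact G).simN (m + 1)) :
    (subst σ T, subst τ T) ∈ (LTSact G).simN (m + 1) := by
  rcases eq_var_or_eq_app T with ⟨n, rfl⟩ | ⟨A, c, rfl⟩
  · simpa using hT n rfl
  · exact subst_app_mem_simN_succ (subst_mem_simN hστ) A c

theorem simN_of_eq_subst_self {σ τ : ℕ → GTerm G.sig} {i : ℕ} {H : GTerm G.sig} {k : ℕ}
    (hH : H ≠ var G.sig i) (hτ : ∀ n ≠ i, τ n = σ n) (hfix : τ i = subst τ H)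
    (hsim : (σ i, subst σ H) ∈ (LTSact G).simN k) :
    ∀ n, (σ n, τ n) ∈ (LTSact G).simN k := by
  suffices ∀ m ≤ k, ∀ n, (σ n, τ n) ∈ (LTSact G).simN m from this k le_rfl
  intro m
  induction m with
  | zero => exact fun _ _ => trivial
  | succ m ih =>
    intro hm n
    rcases eq_or_ne n i with rfl | hn
    · have hHτ : (subst σ H, subst τ H) ∈ (LTSact G).simN (m + 1) := by
        refine subst_mem_simN_succ (ih (by omega)) H fun j hj => ?_
        rw [hτ j (by rintro rfl; exact hH hj)]
        exact simN_refl _ _ _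
      rw [hfix]
      exact simN_trans (simN_antitone hm hsim) hHτ
    · rw [hτ n hn]
      exact simN_refl _ _ _

end Grammar

theorem sim_single_limit_subst_general (G : FOGrammar) (σ : ℕ → GTerm G.sig)
    (i : ℕ) (H H' : GTerm G.sig) (k : ℕ)
    (hH : H ≠ GTerm.var G.sig i)
    (hsim : (σ i, GTerm.subst σ H) ∈ (LTSact G).simN k)
    (hfix : H' = GTerm.subst (singleSub i H') H) :
    ∀ n : ℕ, (σ n, GTerm.subst (remSub σ i) (singleSub i H' n)) ∈ (LTSact G).simN k := by
  refine simN_of_eq_subst_self hH (fun n hn => ?_) ?_ hsim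
  · simp [singleSub, remSub, hn]
  · conv_lhs => rw [singleSub, if_pos rfl, hfix, subst_subst]

/-- if `x_iσ ∼_k Hσ` with `H ≠ x_i`, and `H'` is the (unique) term in
which `x_i` does not occur and with `H' = H{(x_i ↦ H')}`, then
`σ ∼_k {(x_i ↦ H')}(σ∖x_i)` (the composed substitution `x ↦ (x{(x_i ↦ H')})(σ∖x_i)`). -/
theorem sim_single_limit_subst (G : FOGrammar) (σ : ℕ → GTerm G.sig)
    (hσ : FinSupp σ) (i : ℕ) (H H' : GTerm G.sig) (k : ℕ)
    (hH : H ≠ GTerm.var G.sig i)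
    (hsim : (σ i, GTerm.subst σ H) ∈ (LTSact G).simN k)
    (hocc : ¬ VarOccurs G.sig i H')
    (hfix : H' = GTerm.subst (singleSub i H') H) :
    ∀ n : ℕ, (σ n, GTerm.subst (remSub σ i) (singleSub i H' n)) ∈ (LTSact G).simN k :=
  sim_single_limit_subst_general G σ i H H' k hH hsim hfix
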